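/- For all natural numbers a, b, d, n, p, we have ∑_{k=0}^{n} C(a,k)·C(b,n−k)·C(p−k, a+b−d)·C(n−k,d) = C(d+p−n, a+b−n)·C(p−a, n−d)·C(b,d). -/

import Mathlib

/-!
Absorption, `C(b, n-k) C(n-k, d) = C(b, d) C(B, M-k)` with `B = b-d`, `M = n-d`, pulls the
factor `C(b, d)` out of the sum. In what remains, expand `C(p-k, a+B)` by Vandermonde over
`(a-k) + (p-a)`, exchange the sums using `C(a, k) C(a-k, j) = C(a, j) C(a-j, k)`, sum over `k`
by Vandermonde, absorb `C(p-a, a+B-j) C(a+B-j, M) = C(p-a, M) C(p-a-M, a+B-M-j)`, and sum over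
`j` by Vandermonde. With the convention `C x y = 0` outside `0 ≤ y ≤ x`, the absorption identity
`C x y * C y z = C x z * C (x - z) (y - z)` holds for all integers, so the reindexings need no
side conditions.
-/

/-- Binomial coefficient for integers: `C x y` is the usual binomial coefficient
when `0 ≤ y ≤ x`, and `0` otherwise. -/
def C (x y : ℤ) : ℤ := if 0 ≤ y ∧ y ≤ x then (x.toNat.choose y.toNat : ℤ) else 0

theorem C_natCast (x y : ℕ) : C x y = x.choose y := by
  rcases le_or_gt y x with h | h
  · rw [C, if_pos ⟨Int.natCast_nonneg y, by exact_mod_cast h⟩]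
    simp
  · rw [C, if_neg (by omega), Nat.choose_eq_zero_of_lt h, Int.natCast_zero]

theorem C_eq_zero_of_lt {x y : ℤ} (h : x < y) : C x y = 0 := by
  rw [C, if_neg (by omega)]

theorem C_eq_zero_of_neg_right {x y : ℤ} (h : y < 0) : C x y = 0 := by
  rw [C, if_neg (by omega)]

theorem C_eq_zero_of_neg_left {x y : ℤ} (h : x < 0) : C x y = 0 := by
  rw [C, if_neg (by omega)]

theorem C_mul_C (x y z : ℤ) : C x y * C y z = C x z * C (x - z) (y - z) := by
  rcases lt_or_ge z 0 with hz | hz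
  · rw [C_eq_zero_of_neg_right hz, C_eq_zero_of_neg_right hz, mul_zero, zero_mul]
  rcases lt_or_ge y z with hyz | hzy
  · rw [C_eq_zero_of_lt hyz, C_eq_zero_of_neg_right (by omega : y - z < 0), mul_zero, mul_zero]
  rcases lt_or_ge x y with hxy | hyx
  · rw [C_eq_zero_of_lt hxy, zero_mul]
    rcases lt_or_ge x z with hxz | hzx
    · rw [C_eq_zero_of_lt hxz, zero_mul]
    · rw [C_eq_zero_of_lt (by omega : x - z < y - z), mul_zero]
  lift z to ℕ using hz
  lift y to ℕ using by omega
  lift x to ℕ using by omega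
  rw [show (x : ℤ) - z = ((x - z : ℕ) : ℤ) by omega,
    show (y : ℤ) - z = ((y - z : ℕ) : ℤ) by omega]
  simp only [C_natCast]
  exact_mod_cast Nat.choose_mul (by omega)

theorem C_symm_add (i j : ℤ) : C (i + j) i = C (i + j) j := by
  rcases lt_or_ge i 0 with hi | hi
  · rw [C_eq_zero_of_neg_right hi, C_eq_zero_of_lt (by omega)]
  rcases lt_or_ge j 0 with hj | hj
  · rw [C_eq_zero_of_neg_right hj, C_eq_zero_of_lt (by omega)]
  lift i to ℕ using hi
  lift j to ℕ using hj
  rw [← Nat.cast_add, C_natCast, C_natCast, Nat.choose_symm_add]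

theorem C_mul_C_sub_comm (x i j : ℤ) : C x i * C (x - i) j = C x j * C (x - j) i := by
  have hi := C_mul_C x (i + j) i
  have hj := C_mul_C x (i + j) j
  rw [add_sub_cancel_left] at hi
  rw [add_sub_cancel_right] at hj
  rw [← hi, ← hj, C_symm_add]

theorem C_add_eq_sum_range {x y m : ℤ} (hx : 0 ≤ x) (hy : 0 ≤ y) {N : ℕ} (hm : m ≤ N) :
    C (x + y) m = ∑ j ∈ Finset.range (N + 1), C x j * C y (m - j) := by
  rcases lt_or_ge m 0 with hm0 | hm0
  · rw [C_eq_zero_of_neg_right hm0]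
    exact (Finset.sum_eq_zero fun j _ => by
      rw [C_eq_zero_of_neg_right (x := y) (by omega), mul_zero]).symm
  lift m to ℕ using hm0
  lift x to ℕ using hx
  lift y to ℕ using hy
  have htail : ∀ j ∈ Finset.range (N + 1), j ∉ Finset.range (m + 1) →
      C x j * C y ((m : ℤ) - j) = 0 := fun j _ hj => by
    rw [C_eq_zero_of_neg_right (x := y) (by simp at hj; omega), mul_zero]
  rw [← Finset.sum_subset (Finset.range_subset_range.2 (by omega)) htail,
    ← Nat.cast_add, C_natCast, Nat.add_choose_eq,
    Finset.Nat.sum_antidiagonal_eq_sum_range_succ_mk, Nat.cast_sum]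
  refine Finset.sum_congr rfl fun j hj => ?_
  rw [show (m : ℤ) - j = ((m - j : ℕ) : ℤ) by simp at hj; omega,
    C_natCast, C_natCast, Nat.cast_mul]

theorem sum_range_C_mul_C_mul_C {a B M : ℤ} (p : ℤ) (ha : 0 ≤ a) (hB : 0 ≤ B) {N : ℕ}
    (hM : M ≤ N) :
    ∑ k ∈ Finset.range (N + 1), C a k * C B (M - k) * C (p - k) (a + B) =
      C (p - M) (a + B - M) * C (p - a) M := by
  rcases lt_or_ge p a with hpa | hpa
  · rw [C_eq_zero_of_neg_left (by omega : p - a < 0), mul_zero]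
    exact Finset.sum_eq_zero fun k _ => by rw [C_eq_zero_of_lt (x := p - k) (by omega), mul_zero]
  calc ∑ k ∈ Finset.range (N + 1), C a k * C B (M - k) * C (p - k) (a + B)
      = ∑ k ∈ Finset.range (N + 1), ∑ j ∈ Finset.range (a.toNat + B.toNat + 1),
          C a k * C B (M - k) * (C (a - k) j * C (p - a) (a + B - j)) := by
        refine Finset.sum_congr rfl fun k _ => ?_
        rcases lt_or_ge a k with hak | hka
        · simp [C_eq_zero_of_lt hak]
        rw [← Finset.mul_sum, ← C_add_eq_sum_range (by omega) (by omega) (by omega)]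
        ring_nf
    _ = ∑ j ∈ Finset.range (a.toNat + B.toNat + 1), C a j * C (p - a) (a + B - j) *
          ∑ k ∈ Finset.range (N + 1), C (a - j) k * C B (M - k) := by
        rw [Finset.sum_comm]
        refine Finset.sum_congr rfl fun j _ => ?_
        rw [Finset.mul_sum]
        refine Finset.sum_congr rfl fun k _ => ?_
        linear_combination C B (M - k) * C (p - a) (a + B - j) * C_mul_C_sub_comm a k j
    _ = ∑ j ∈ Finset.range (a.toNat + B.toNat + 1), C a j * C (p - a) (a + B - j) *
          C (a - j + B) M := by
        refine Finset.sum_congr rfl fun j _ => ?_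
        rcases lt_or_ge a j with haj | hja
        · simp [C_eq_zero_of_lt haj]
        rw [C_add_eq_sum_range (by omega) hB hM]
    _ = C (p - a) M * ∑ j ∈ Finset.range (a.toNat + B.toNat + 1),
          C a j * C (p - a - M) (a + B - M - j) := by
        rw [Finset.mul_sum]
        refine Finset.sum_congr rfl fun j _ => ?_
        rw [show a - (j : ℤ) + B = a + B - j by ring, mul_assoc, C_mul_C, sub_right_comm (a + B)]
        ring
    _ = C (p - M) (a + B - M) * C (p - a) M := by
        rcases lt_or_ge M 0 with hM0 | hM0
        · rw [C_eq_zero_of_neg_right hM0, zero_mul, mul_zero]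
        rcases lt_or_ge (p - a) M with hpM | hMp
        · rw [C_eq_zero_of_lt hpM, zero_mul, mul_zero]
        rw [← C_add_eq_sum_range ha (by omega) (by omega), show a + (p - a - M) = p - M by ring,
          mul_comm]

theorem stmt_6 (a b d n p : ℕ) :
    ∑ k ∈ Finset.range (n + 1), C a k * C b ((n : ℤ) - k) * C ((p : ℤ) - k) ((a : ℤ) + b - d) * C ((n : ℤ) - k) d = C ((d : ℤ) + p - n) ((a : ℤ) + b - n) * C ((p : ℤ) - a) ((n : ℤ) - d) * C b d := by
  calc
    _ = C b d * ∑ k ∈ Finset.range (n + 1),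
          C a k * C ((b : ℤ) - d) ((n : ℤ) - d - k) *
            C ((p : ℤ) - k) (a + ((b : ℤ) - d)) := by
      rw [Finset.mul_sum]
      refine Finset.sum_congr rfl fun k _ => ?_
      rw [← add_sub_assoc, sub_right_comm (n : ℤ) d]
      linear_combination C a k * C (p - k) (a + b - d) * C_mul_C b (n - k) d
    _ = _ := by
      rcases lt_or_ge b d with hbd | hdb
      · rw [C_natCast, Nat.choose_eq_zero_of_lt hbd, Nat.cast_zero, zero_mul, mul_zero]
      rw [sum_range_C_mul_C_mul_C _ (by omega) (by omega) (by omega),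
        show (p : ℤ) - (n - d) = d + p - n by ring,
        show (a : ℤ) + (b - d) - (n - d) = a + b - n by ring]
      ring
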